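/- arXiv:math/0503143 — 4 statements merged into one kernel-verified Lean document; each statement's English description precedes it below -/
import Mathlib

section
/- Let p be an odd integer with p ≥ 3 and let θ ∈ (0, π). Then the real number D_p(e^{iθ}) = cos(pθ/2)/cos(θ/2) is negative if and only if there exists a natural number k such that (4k+1)π/p < θ < (4k+3)π/p. -/
/-! Writing `u = e^{iθ}`, the relation `(u + 1) D(u) = u^p + 1` and the factorisation
`e^{ix} + 1 = 2 cos (x/2) e^{ix/2}` give `D_p(u) = cos (pθ/2) / cos (θ/2)`, whose denominator is
positive on `(0, π)`. So the sign question is that of `cos (pθ/2) < 0`, i.e. of `pθ/2` lying in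
some `((4k+1)π/2, (4k+3)π/2)`. -/

open LaurentPolynomial

/-- Evaluation of an integer Laurent polynomial at a (nonzero) complex number `z`,
substituting `t = z`. -/
noncomputable def evalz (z : ℂ) (f : LaurentPolynomial ℤ) : ℂ :=
  f.coeff.sum fun n a => (a : ℂ) * z ^ n

noncomputable def evalzAlgHom (u : ℂˣ) : LaurentPolynomial ℤ →ₐ[ℤ] ℂ :=
  AddMonoidAlgebra.lift ℤ ℂ ℤ ((Units.coeHom ℂ).comp (zpowersHom ℂˣ u))

lemma evalz_eq_evalzAlgHom (u : ℂˣ) (f : LaurentPolynomial ℤ) :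
    evalz u f = evalzAlgHom u f := by
  rw [evalzAlgHom, AddMonoidAlgebra.lift_apply]
  exact Finsupp.sum_congr fun n _ => by simp [zsmul_eq_mul]

lemma evalzAlgHom_T (u : ℂˣ) (n : ℤ) : evalzAlgHom u (T n) = (u : ℂ) ^ n := by
  rw [evalzAlgHom, T, AddMonoidAlgebra.lift_single]
  simp

lemma add_one_mul_evalz_T_mul {m p : ℤ} {D : LaurentPolynomial ℤ}
    (hD : (T 1 + 1) * D = T p + 1) (u : ℂˣ) :
    ((u : ℂ) + 1) * evalz u (T m * D) = (u : ℂ) ^ m * ((u : ℂ) ^ p + 1) := by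
  have h := congrArg (evalzAlgHom u) hD
  simp only [map_mul, map_add, map_one, evalzAlgHom_T, zpow_one] at h
  rw [evalz_eq_evalzAlgHom, map_mul, evalzAlgHom_T, mul_left_comm, h]

lemma Complex.exp_mul_I_add_one (x : ℝ) :
    exp (x * I) + 1 = 2 * (Real.cos (x / 2) : ℂ) * exp ((x / 2 : ℝ) * I) := by
  rw [ofReal_cos, Complex.cos, mul_div_cancel₀ _ two_ne_zero, add_mul, ← exp_add, ← exp_add]
  push_cast
  ring_nf
  simp [add_comm]

lemma evalz_exp_mul_I_T_neg_mul {θ : ℝ} (hθ : Real.cos (θ / 2) ≠ 0) {p j : ℕ}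
    (hpj : p = 2 * j + 1) {D : LaurentPolynomial ℤ} (hD : (T 1 + 1) * D = T (p : ℤ) + 1) :
    evalz (Complex.exp (θ * Complex.I)) (T (-(j : ℤ)) * D) =
      ((Real.cos (p * θ / 2) / Real.cos (θ / 2) : ℝ) : ℂ) := by
  obtain ⟨u, hu⟩ : ∃ u : ℂˣ, (u : ℂ) = Complex.exp (θ * Complex.I) :=
    ⟨Units.mk0 _ (Complex.exp_ne_zero _), rfl⟩
  have hu_pow (n : ℤ) : (u : ℂ) ^ n = Complex.exp ((n * θ : ℝ) * Complex.I) := by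
    rw [hu, ← Complex.exp_int_mul]
    push_cast
    ring_nf
  have hu_add_one :
      (u : ℂ) + 1 = 2 * (Real.cos (θ / 2) : ℂ) * Complex.exp ((θ / 2 : ℝ) * Complex.I) := by
    rw [hu, Complex.exp_mul_I_add_one]
  have hu_pow_add_one : (u : ℂ) ^ (p : ℤ) + 1 =
      2 * (Real.cos (p * θ / 2) : ℂ) * Complex.exp ((p * θ / 2 : ℝ) * Complex.I) := by
    rw [hu_pow, Int.cast_natCast, Complex.exp_mul_I_add_one]
  have hphase : (u : ℂ) ^ (-(j : ℤ)) * Complex.exp ((p * θ / 2 : ℝ) * Complex.I) =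
      Complex.exp ((θ / 2 : ℝ) * Complex.I) := by
    rw [hu_pow, ← Complex.exp_add, hpj]
    push_cast
    ring_nf
  have hc : (Real.cos (θ / 2) : ℂ) ≠ 0 := Complex.ofReal_ne_zero.mpr hθ
  have hne : (u : ℂ) + 1 ≠ 0 := by
    rw [hu_add_one]
    exact mul_ne_zero (mul_ne_zero two_ne_zero hc) (Complex.exp_ne_zero _)
  rw [← hu]
  refine mul_left_cancel₀ hne ?_
  rw [add_one_mul_evalz_T_mul hD u, hu_pow_add_one, mul_left_comm, hphase, hu_add_one,
    Complex.ofReal_div (Real.cos _)]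
  field_simp

namespace Real

lemma cos_neg_iff_exists_int {x : ℝ} :
    cos x < 0 ↔ ∃ k : ℤ, (4 * k + 1) * π / 2 < x ∧ x < (4 * k + 3) * π / 2 := by
  constructor
  · intro hx
    set k := toIcoDiv two_pi_pos (π / 2) x
    obtain ⟨hlo, hhi⟩ := sub_toIcoDiv_zsmul_mem_Ico two_pi_pos (π / 2) x
    rw [zsmul_eq_mul] at hlo hhi
    have hcos : cos (x - k * (2 * π)) < 0 := by rwa [cos_sub_int_mul_two_pi]
    have hlt : π / 2 < x - k * (2 * π) := by
      by_contra! h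
      linarith [cos_nonneg_of_mem_Icc ⟨by linarith [pi_pos], h⟩]
    have hgt : x - k * (2 * π) < 3 * π / 2 := by
      by_contra! h
      have := cos_nonneg_of_mem_Icc (x := x - k * (2 * π) - 2 * π) ⟨by linarith, by linarith⟩
      rw [cos_sub_two_pi] at this
      linarith
    exact ⟨k, by linarith, by linarith⟩
  · rintro ⟨k, hlo, hhi⟩
    rw [← cos_sub_int_mul_two_pi x k]
    exact cos_neg_of_pi_div_two_lt_of_lt (by linarith) (by linarith)

lemma cos_neg_iff_exists_nat {x : ℝ} (hx : 0 < x) :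
    cos x < 0 ↔ ∃ k : ℕ, (4 * k + 1) * π / 2 < x ∧ x < (4 * k + 3) * π / 2 := by
  rw [cos_neg_iff_exists_int]
  constructor
  · rintro ⟨k, hlo, hhi⟩
    have hk : (-1 : ℝ) < k := by nlinarith [pi_pos]
    lift k to ℕ using by exact_mod_cast hk
    exact ⟨k, by exact_mod_cast hlo, by exact_mod_cast hhi⟩
  · rintro ⟨k, hlo, hhi⟩
    exact ⟨k, by exact_mod_cast hlo, by exact_mod_cast hhi⟩

end Real

theorem dp_negative_iff_general (p : ℕ) (hodd : Odd p) (θ : ℝ)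
    (hθ : θ ∈ Set.Ioo 0 Real.pi) :
    ∀ D : LaurentPolynomial ℤ, (T 1 + 1) * D = T (p : ℤ) + 1 →
      evalz (Complex.exp (θ * Complex.I)) (T (-(((p : ℤ) - 1) / 2)) * D) =
        ((Real.cos (p * θ / 2) / Real.cos (θ / 2) : ℝ) : ℂ) ∧
      (Real.cos (p * θ / 2) / Real.cos (θ / 2) < 0 ↔
        ∃ k : ℕ, (4 * k + 1) * Real.pi / p < θ ∧ θ < (4 * k + 3) * Real.pi / p) := by
  obtain ⟨hθ0, hθπ⟩ := hθ
  have hcos : 0 < Real.cos (θ / 2) :=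
    Real.cos_pos_of_mem_Ioo ⟨by linarith [Real.pi_pos], by linarith⟩
  have hp : (0 : ℝ) < p := by exact_mod_cast hodd.pos
  intro D hD
  obtain ⟨j, hj⟩ := hodd
  refine ⟨?_, ?_⟩
  · rw [show -(((p : ℤ) - 1) / 2) = -(j : ℤ) by omega]
    exact evalz_exp_mul_I_T_neg_mul hcos.ne' hj hD
  · rw [div_lt_iff₀ hcos, zero_mul, Real.cos_neg_iff_exists_nat (by positivity)]
    refine exists_congr fun k => and_congr ?_ ?_
    · rw [div_lt_div_iff_of_pos_right two_pos, div_lt_iff₀ hp, mul_comm θ]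
    · rw [div_lt_div_iff_of_pos_right two_pos, lt_div_iff₀ hp, mul_comm θ]

/-- For `p` odd, `p ≥ 3`, and `θ ∈ (0, π)`, the real number
`D_p(e^(iθ)) = cos (p θ / 2) / cos (θ / 2)` is negative if and only if
`(4k+1)π/p < θ < (4k+3)π/p` for some natural number `k`. -/
theorem dp_negative_iff (p : ℕ) (hodd : Odd p) (hp : 3 ≤ p) (θ : ℝ)
    (hθ : θ ∈ Set.Ioo 0 Real.pi) :
    ∀ D : LaurentPolynomial ℤ, (T 1 + 1) * D = T (p : ℤ) + 1 →
      evalz (Complex.exp (θ * Complex.I)) (T (-(((p : ℤ) - 1) / 2)) * D) =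
        ((Real.cos (p * θ / 2) / Real.cos (θ / 2) : ℝ) : ℂ) ∧
      (Real.cos (p * θ / 2) / Real.cos (θ / 2) < 0 ↔
        ∃ k : ℕ, (4 * k + 1) * Real.pi / p < θ ∧ θ < (4 * k + 3) * Real.pi / p) :=
  dp_negative_iff_general p hodd θ hθ
end

section
/- For p an odd integer ≥ 3, set A_p := { θ ∈ (0, 2π) : θ ≠ π and cos(pθ/2)/cos(θ/2) < 0 }. Then for every odd p ≥ 3 there exists an odd q > p such that every connected component of A_p and every connected component of (0,2π) \ A_p contains points of both A_q and of (0,2π) \ A_q. In particular q can be taken to be any sufficiently large odd integer. -/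
/-- For `p` odd `≥ 3`, the set of angles `θ ∈ (0, 2π)`, `θ ≠ π`, where the signature-type
quantity `D_p(e^(iθ)) = cos (p θ / 2) / cos (θ / 2)` is negative. -/
noncomputable def Aset (p : ℕ) : Set ℝ :=
  {θ : ℝ | θ ∈ Set.Ioo 0 (2 * Real.pi) ∧ θ ≠ Real.pi ∧
    Real.cos (p * θ / 2) / Real.cos (θ / 2) < 0}

/-- The complement of `Aset p` inside `(0, 2π) \ {π}`. -/
noncomputable def Bset (p : ℕ) : Set ℝ :=
  (Set.Ioo 0 (2 * Real.pi) \ {Real.pi}) \ Aset p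

/-!
The quotient `cos (pθ/2) / cos (θ/2)` has the sign of `cosProd p θ = cos (pθ/2) * cos (θ/2)`.
On the window `((2n-1)π/p, (2n+1)π/p) ∩ (0, 2π)` the first factor has the sign `(-1)^n`; as `p`
is odd, `π = pπ/p` is never inside a window, so the second factor has constant sign there too.
Hence every component of `A_p`, or of its complement, contains an interval of length `π/p` on
one side of `π`: a whole window, or, at a zero `(2n+1)π/p`, the half window on the side where
`cosProd p` is positive. An interval on one side of `π` longer than `4π/q` contains two
consecutive grid points `2jπ/q`, `2(j+1)π/q`, where `cosProd q` takes opposite nonzero signs;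
so every `q > 4p` works.
-/

open Real Set

noncomputable def cosProd (p : ℕ) (θ : ℝ) : ℝ := cos (p * θ / 2) * cos (θ / 2)

lemma mem_Aset_iff {p : ℕ} {θ : ℝ} :
    θ ∈ Aset p ↔ θ ∈ Ioo 0 (2 * π) ∧ θ ≠ π ∧ cosProd p θ < 0 := by
  simp only [Aset, cosProd, mem_ofPred_eq, div_neg_iff, mul_neg_iff]

lemma mem_Bset_iff {p : ℕ} {θ : ℝ} :
    θ ∈ Bset p ↔ θ ∈ Ioo 0 (2 * π) ∧ θ ≠ π ∧ 0 ≤ cosProd p θ := by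
  simp only [Bset, mem_sdiff, mem_singleton_iff, mem_Aset_iff]
  constructor
  · rintro ⟨⟨h₁, h₂⟩, h₃⟩
    exact ⟨h₁, h₂, not_lt.1 fun h => h₃ ⟨h₁, h₂, h⟩⟩
  · rintro ⟨h₁, h₂, h₃⟩
    exact ⟨⟨h₁, h₂⟩, fun h => h.2.2.not_ge h₃⟩

def OnOneSideOfPi (s : Set ℝ) : Prop := s ⊆ Ioo 0 π ∨ s ⊆ Ioo π (2 * π)

namespace OnOneSideOfPi

variable {s t : Set ℝ} {x y : ℝ}

lemma mono (ht : OnOneSideOfPi t) (hst : s ⊆ t) : OnOneSideOfPi s :=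
  ht.imp hst.trans hst.trans

lemma mem_Ioo_ne_pi (hs : OnOneSideOfPi s) (hx : x ∈ s) : x ∈ Ioo 0 (2 * π) ∧ x ≠ π := by
  have := pi_pos
  rcases hs with hs | hs <;> obtain ⟨h₁, h₂⟩ := hs hx <;>
    exact ⟨⟨by linarith, by linarith⟩, by linarith⟩

lemma cos_half_mul_cos_half_pos (hs : OnOneSideOfPi s) (hx : x ∈ s) (hy : y ∈ s) :
    0 < cos (x / 2) * cos (y / 2) := by
  have := pi_pos
  have cos_half_pos : ∀ z ∈ Ioo 0 π, 0 < cos (z / 2) := fun z hz =>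
    cos_pos_of_mem_Ioo ⟨by linarith [hz.1], by linarith [hz.2]⟩
  have cos_half_neg : ∀ z ∈ Ioo π (2 * π), cos (z / 2) < 0 := fun z hz =>
    cos_neg_of_pi_div_two_lt_of_lt (by linarith [hz.1]) (by linarith [hz.2])
  rcases hs with hs | hs
  · exact mul_pos (cos_half_pos x (hs hx)) (cos_half_pos y (hs hy))
  · exact mul_pos_of_neg_of_neg (cos_half_neg x (hs hx)) (cos_half_neg y (hs hy))

end OnOneSideOfPi

lemma onOneSideOfPi_Ioo_inter {a b : ℝ} (h : π ∉ Ioo a b) :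
    OnOneSideOfPi (Ioo a b ∩ Ioo 0 (2 * π)) := by
  rcases le_or_gt b π with hb | hb
  · exact Or.inl fun x hx => ⟨hx.2.1, hx.1.2.trans_le hb⟩
  · have ha : π ≤ a := not_lt.1 fun ha => h ⟨ha, hb⟩
    exact Or.inr fun x hx => ⟨ha.trans_lt hx.1.1, hx.2.2⟩

lemma pi_mem_Ioo_mul_pi_div_iff {p : ℕ} (hp : 0 < p) {a b : ℝ} :
    π ∈ Ioo (a * π / p) (b * π / p) ↔ a < p ∧ p < b := by
  have hp' : (0 : ℝ) < p := by exact_mod_cast hp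
  rw [mem_Ioo, div_lt_iff₀ hp', lt_div_iff₀ hp', mul_comm π,
    mul_lt_mul_iff_left₀ pi_pos, mul_lt_mul_iff_left₀ pi_pos]

lemma mem_Ioo_mul_pi_div_iff {p : ℕ} (hp : 0 < p) {n : ℤ} {θ : ℝ} :
    θ ∈ Ioo ((2 * n - 1) * π / p) ((2 * n + 1) * π / p) ↔
      p * θ / 2 ∈ Ioo (n * π - π / 2) (n * π + π / 2) := by
  have hp' : (0 : ℝ) < p := by exact_mod_cast hp
  simp only [mem_Ioo, div_lt_iff₀ hp', lt_div_iff₀ hp']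
  constructor <;> rintro ⟨h₁, h₂⟩ <;> constructor <;> linarith

lemma neg_one_zpow_mul_cos_pos {n : ℤ} {x : ℝ}
    (hx : x ∈ Ioo (n * π - π / 2) (n * π + π / 2)) :
    0 < (-1) ^ n * cos x := by
  have hpos : 0 < cos (x - n * π) :=
    cos_pos_of_mem_Ioo ⟨by linarith [hx.1], by linarith [hx.2]⟩
  rwa [cos_sub_int_mul_pi] at hpos

lemma exists_mem_Ioo_of_cos_ne_zero {x : ℝ} (hx : cos x ≠ 0) :
    ∃ n : ℤ, x ∈ Ioo (n * π - π / 2) (n * π + π / 2) := by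
  have hround := abs_le.1 (abs_sub_round (x / π))
  set n := round (x / π)
  have h₁ : n * π - π / 2 ≤ x := by
    have := mul_le_mul_of_nonneg_right hround.1 pi_pos.le
    rw [sub_mul, div_mul_cancel₀ _ pi_ne_zero] at this; linarith
  have h₂ : x ≤ n * π + π / 2 := by
    have := mul_le_mul_of_nonneg_right hround.2 pi_pos.le
    rw [sub_mul, div_mul_cancel₀ _ pi_ne_zero] at this; linarith
  refine ⟨n, h₁.lt_of_ne fun h => hx ?_, h₂.lt_of_ne fun h => hx ?_⟩ <;>
    rw [cos_eq_zero_iff]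
  · exact ⟨n - 1, by rw [← h]; push_cast; ring⟩
  · exact ⟨n, by rw [h]; ring⟩

lemma OnOneSideOfPi.neg_one_zpow_mul_cosProd_mul_pos {p : ℕ} (hp : 0 < p) {s : Set ℝ}
    {n m : ℤ} {x y : ℝ} (hs : OnOneSideOfPi s) (hx : x ∈ s) (hy : y ∈ s)
    (hxn : x ∈ Ioo ((2 * n - 1) * π / p) ((2 * n + 1) * π / p))
    (hym : y ∈ Ioo ((2 * m - 1) * π / p) ((2 * m + 1) * π / p)) :
    0 < (-1) ^ (n + m) * (cosProd p x * cosProd p y) := by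
  have hcx := neg_one_zpow_mul_cos_pos ((mem_Ioo_mul_pi_div_iff hp).1 hxn)
  have hcy := neg_one_zpow_mul_cos_pos ((mem_Ioo_mul_pi_div_iff hp).1 hym)
  have hhalf := hs.cos_half_mul_cos_half_pos hx hy
  have : (-1 : ℝ) ^ (n + m) * (cosProd p x * cosProd p y) =
      ((-1) ^ n * cos (p * x / 2)) * ((-1) ^ m * cos (p * y / 2)) *
        (cos (x / 2) * cos (y / 2)) := by
    rw [zpow_add₀ (by norm_num)]; unfold cosProd; ring
  rw [this]
  exact mul_pos (mul_pos hcx hcy) hhalf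

lemma OnOneSideOfPi.inter_Aset_nonempty_and_inter_Bset_nonempty {q : ℕ} {s : Set ℝ} {x y : ℝ}
    (hs : OnOneSideOfPi s) (hx : x ∈ s) (hy : y ∈ s) (h : cosProd q x * cosProd q y < 0) :
    (s ∩ Aset q).Nonempty ∧ (s ∩ Bset q).Nonempty := by
  obtain ⟨hxI, hxπ⟩ := hs.mem_Ioo_ne_pi hx
  obtain ⟨hyI, hyπ⟩ := hs.mem_Ioo_ne_pi hy
  rcases lt_or_ge (cosProd q x) 0 with hneg | hnonneg
  · exact ⟨⟨x, hx, mem_Aset_iff.2 ⟨hxI, hxπ, hneg⟩⟩,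
      ⟨y, hy, mem_Bset_iff.2 ⟨hyI, hyπ, (pos_of_mul_neg_right h hneg.le).le⟩⟩⟩
  · exact ⟨⟨y, hy, mem_Aset_iff.2 ⟨hyI, hyπ, neg_of_mul_neg_right h hnonneg⟩⟩,
      ⟨x, hx, mem_Bset_iff.2 ⟨hxI, hxπ, hnonneg⟩⟩⟩

lemma exists_int_mul_mem_Ioo {α : Type*} [Field α] [LinearOrder α] [IsStrictOrderedRing α]
    [FloorRing α] {a b c : α} (hc : 0 < c) (h : c < b - a) :
    ∃ j : ℤ, j * c ∈ Ioo a b := by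
  refine ⟨⌊a / c⌋ + 1, ?_, ?_⟩
  · have := Int.lt_floor_add_one (a / c)
    push_cast
    rwa [div_lt_iff₀ hc] at this
  · have := Int.floor_le (a / c)
    rw [le_div_iff₀ hc] at this
    push_cast
    linarith

def ContainsOneSidedIoo (t : Set ℝ) (ℓ : ℝ) : Prop :=
  ∃ a, OnOneSideOfPi (Ioo a (a + ℓ)) ∧ Ioo a (a + ℓ) ⊆ t

lemma ContainsOneSidedIoo.inter_Aset_nonempty_and_inter_Bset_nonempty {t : Set ℝ} {ℓ : ℝ}
    {q : ℕ} (ht : ContainsOneSidedIoo t ℓ) (hq : 0 < q) (hℓ : 4 * π / q < ℓ) :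
    (t ∩ Aset q).Nonempty ∧ (t ∩ Bset q).Nonempty := by
  obtain ⟨a, hs, hsub⟩ := ht
  have hq' : (0 : ℝ) < q := by exact_mod_cast hq
  set c := 2 * π / q with hc
  have hc0 : 0 < c := by positivity
  have hc2 : 2 * c = 4 * π / q := by rw [hc]; ring
  obtain ⟨j, hj₁, hj₂⟩ :=
    exists_int_mul_mem_Ioo (a := a) (b := a + ℓ - c) hc0 (by linarith)
  have hx : j * c ∈ Ioo a (a + ℓ) := ⟨hj₁, by linarith⟩
  have hy : j * c + c ∈ Ioo a (a + ℓ) := ⟨by linarith, by linarith⟩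
  have hqx : q * (j * c) / 2 = j * π := by rw [hc]; field_simp
  have hqy : q * (j * c + c) / 2 = j * π + π := by rw [hc]; field_simp
  have hcos_sq : cos (q * (j * c) / 2) ^ 2 = 1 := by
    rw [hqx, cos_int_mul_pi]
    rcases Int.even_or_odd j with h | h <;> simp [h.neg_one_zpow]
  have hprod : cosProd q (j * c) * cosProd q (j * c + c) =
      -(cos (q * (j * c) / 2) ^ 2 * (cos (j * c / 2) * cos ((j * c + c) / 2))) := by
    unfold cosProd; rw [hqy, ← hqx, cos_add_pi]; ring
  have hneg : cosProd q (j * c) * cosProd q (j * c + c) < 0 := by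
    rw [hprod, hcos_sq, one_mul, neg_lt_zero]
    exact hs.cos_half_mul_cos_half_pos hx hy
  obtain ⟨hA, hB⟩ := hs.inter_Aset_nonempty_and_inter_Bset_nonempty hx hy hneg
  exact ⟨hA.mono (inter_subset_inter_left _ hsub), hB.mono (inter_subset_inter_left _ hsub)⟩

def window (p : ℕ) (n : ℤ) : Set ℝ :=
  Ioo ((2 * n - 1) * π / p) ((2 * n + 1) * π / p) ∩ Ioo 0 (2 * π)

lemma isPreconnected_window (p : ℕ) (n : ℤ) : IsPreconnected (window p n) :=
  (ordConnected_Ioo.inter ordConnected_Ioo).isPreconnected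

lemma onOneSideOfPi_window {p : ℕ} (hp : Odd p) (n : ℤ) : OnOneSideOfPi (window p n) := by
  refine onOneSideOfPi_Ioo_inter fun hπ => ?_
  obtain ⟨h₁, h₂⟩ := (pi_mem_Ioo_mul_pi_div_iff hp.pos).1 hπ
  have h₁' : 2 * n - 1 < (p : ℤ) := by exact_mod_cast h₁
  have h₂' : (p : ℤ) < 2 * n + 1 := by exact_mod_cast h₂
  obtain ⟨k, rfl⟩ := hp
  push_cast at h₁' h₂'
  omega

lemma exists_mem_window {p : ℕ} (hp : 0 < p) {θ : ℝ} (hθ : θ ∈ Ioo 0 (2 * π))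
    (h : cos (p * θ / 2) ≠ 0) : ∃ n, θ ∈ window p n := by
  obtain ⟨n, hn⟩ := exists_mem_Ioo_of_cos_ne_zero h
  exact ⟨n, (mem_Ioo_mul_pi_div_iff hp).2 hn, hθ⟩

lemma exists_Ioo_subset_window {p : ℕ} (hp : 0 < p) {n : ℤ} (hn : (window p n).Nonempty) :
    ∃ a, Ioo a (a + π / p) ⊆ window p n := by
  unfold window at *
  simp only [mul_div_assoc] at *
  obtain ⟨θ, ⟨hθ₁, hθ₂⟩, hθ₃, hθ₄⟩ := hn
  have hu : 0 < π / p := by positivity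
  have hup : (p : ℝ) * (π / p) = π := by field_simp
  have hn₀ : 0 ≤ n := by
    have : (0 : ℝ) < 2 * n + 1 := pos_of_mul_pos_left (hθ₃.trans hθ₂) hu.le
    have : (0 : ℤ) < 2 * n + 1 := by exact_mod_cast this
    omega
  have hnp : n ≤ p := by
    have : (2 * n - 1 : ℝ) < 2 * p :=
      lt_of_mul_lt_mul_right (by linarith : (2 * n - 1) * (π / p) < 2 * p * (π / p)) hu.le
    have : 2 * n - 1 < 2 * (p : ℤ) := by exact_mod_cast this
    omega
  have hnp' : (n : ℝ) ≤ p := by exact_mod_cast hnp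
  rcases hn₀.eq_or_lt with rfl | hn₁
  · have hp₁ : (1 : ℝ) ≤ p := by exact_mod_cast hp
    refine ⟨0, fun x hx => ⟨⟨?_, ?_⟩, hx.1, ?_⟩⟩ <;> push_cast <;>
      nlinarith [hx.1, hx.2]
  · have hn₁ : (1 : ℝ) ≤ n := by exact_mod_cast hn₁
    refine ⟨(2 * n - 1) * (π / p), fun x hx => ⟨⟨hx.1, ?_⟩, ?_, ?_⟩⟩ <;>
      nlinarith [hx.1, hx.2]

lemma cosProd_mul_pos_of_mem_window {p : ℕ} (hp : Odd p) {n : ℤ} {x y : ℝ}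
    (hx : x ∈ window p n) (hy : y ∈ window p n) : 0 < cosProd p x * cosProd p y := by
  have := (onOneSideOfPi_window hp n).neg_one_zpow_mul_cosProd_mul_pos hp.pos hx hy hx.1 hy.1
  rwa [Even.neg_one_zpow ⟨n, rfl⟩, one_mul] at this

lemma window_subset_Aset {p : ℕ} (hp : Odd p) {n : ℤ} {θ : ℝ} (hθ : θ ∈ window p n)
    (hA : θ ∈ Aset p) : window p n ⊆ Aset p := fun _ hx =>
  mem_Aset_iff.2 ⟨hx.2, ((onOneSideOfPi_window hp n).mem_Ioo_ne_pi hx).2,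
    neg_of_mul_pos_right (cosProd_mul_pos_of_mem_window hp hθ hx) (mem_Aset_iff.1 hA).2.2.le⟩

lemma window_subset_Bset {p : ℕ} (hp : Odd p) {n : ℤ} {θ : ℝ} (hθ : θ ∈ window p n)
    (hB : θ ∈ Bset p) : window p n ⊆ Bset p := fun _ hx =>
  mem_Bset_iff.2 ⟨hx.2, ((onOneSideOfPi_window hp n).mem_Ioo_ne_pi hx).2,
    (pos_of_mul_pos_right (cosProd_mul_pos_of_mem_window hp hθ hx) (mem_Bset_iff.1 hB).2.2).le⟩

lemma containsOneSidedIoo_connectedComponentIn_of_window {p : ℕ} (hp : Odd p) {n : ℤ}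
    {S : Set ℝ} {θ : ℝ} (hθ : θ ∈ window p n) (hS : window p n ⊆ S) :
    ContainsOneSidedIoo (connectedComponentIn S θ) (π / p) := by
  obtain ⟨a, ha⟩ := exists_Ioo_subset_window hp.pos ⟨θ, hθ⟩
  exact ⟨a, (onOneSideOfPi_window hp n).mono ha,
    ha.trans ((isPreconnected_window p n).subset_connectedComponentIn hθ hS)⟩

lemma containsOneSidedIoo_connectedComponentIn_Aset {p : ℕ} (hp : Odd p) {θ : ℝ}
    (hθ : θ ∈ Aset p) : ContainsOneSidedIoo (connectedComponentIn (Aset p) θ) (π / p) := by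
  obtain ⟨hθI, -, hneg⟩ := mem_Aset_iff.1 hθ
  obtain ⟨n, hn⟩ := exists_mem_window hp.pos hθI fun h => by simp [cosProd, h] at hneg
  exact containsOneSidedIoo_connectedComponentIn_of_window hp hn (window_subset_Aset hp hn hθ)

lemma containsOneSidedIoo_connectedComponentIn_of_Ioo_subset {S : Set ℝ} {θ ℓ : ℝ}
    (hθ : θ ∈ S) (hℓ : 0 < ℓ) (hside : OnOneSideOfPi (Ioo (θ - ℓ) (θ + ℓ)))
    (h : Ioo (θ - ℓ) θ ⊆ S ∨ Ioo θ (θ + ℓ) ⊆ S) :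
    ContainsOneSidedIoo (connectedComponentIn S θ) ℓ := by
  rcases h with h | h
  · refine ⟨θ - ℓ, hside.mono (Ioo_subset_Ioo_right (by linarith)), ?_⟩
    rw [sub_add_cancel]
    refine Ioo_subset_Ioc_self.trans (isPreconnected_Ioc.subset_connectedComponentIn
      ⟨by linarith, le_rfl⟩ ?_)
    rw [← Ioo_insert_right (by linarith)]
    exact insert_subset hθ h
  · refine ⟨θ, hside.mono (Ioo_subset_Ioo_left (by linarith)),
      Ioo_subset_Ico_self.trans (isPreconnected_Ico.subset_connectedComponentIn
        ⟨le_rfl, by linarith⟩ ?_)⟩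
    rw [← Ioo_insert_left (by linarith)]
    exact insert_subset hθ h

lemma onOneSideOfPi_Ioo_of_eq_odd_mul_pi_div {p : ℕ} (hp : Odd p) {θ : ℝ}
    (hθ : θ ∈ Ioo 0 (2 * π)) (hθπ : θ ≠ π) {n : ℤ} (hn : θ = (2 * n + 1) * π / p) :
    OnOneSideOfPi (Ioo (θ - π / p) (θ + π / p)) := by
  have hp₀ : (0 : ℝ) < p := by exact_mod_cast hp.pos
  set u := π / p with hu_def
  have hu : 0 < u := by positivity
  have hpu : p * u = π := by rw [hu_def]; field_simp
  rw [mul_div_assoc] at hn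
  have hn₀ : 0 ≤ n := by
    have : (0 : ℝ) < 2 * n + 1 := pos_of_mul_pos_left (hn ▸ hθ.1) hu.le
    have : (0 : ℤ) < 2 * n + 1 := by exact_mod_cast this
    omega
  have hnp : n + 1 ≤ p := by
    have : (2 * n + 1 : ℝ) < 2 * p :=
      lt_of_mul_lt_mul_right (by nlinarith [hθ.2] : (2 * n + 1) * u < 2 * p * u) hu.le
    have : 2 * n + 1 < 2 * (p : ℤ) := by exact_mod_cast this
    omega
  have hn₀' : (0 : ℝ) ≤ n := by exact_mod_cast hn₀
  have hnp' : (n : ℝ) + 1 ≤ p := by exact_mod_cast hnp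
  refine (onOneSideOfPi_Ioo_inter fun hπ => hθπ ?_).mono fun x hx =>
    ⟨hx, by nlinarith [hx.1], by nlinarith [hx.2]⟩
  have h₁ : (2 * n : ℝ) < p := lt_of_mul_lt_mul_right (by linarith [hπ.1]) hu.le
  have h₂ : (p : ℝ) < 2 * n + 2 := lt_of_mul_lt_mul_right (by linarith [hπ.2]) hu.le
  have h₁' : 2 * n < (p : ℤ) := by exact_mod_cast h₁
  have h₂' : (p : ℤ) < 2 * n + 2 := by exact_mod_cast h₂
  have : (p : ℝ) = 2 * n + 1 := by exact_mod_cast (by omega : (p : ℤ) = 2 * n + 1)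
  rw [hn, ← this, hpu]

lemma cosProd_mul_neg_of_eq_odd_mul_pi_div {p : ℕ} (hp : Odd p) {θ x y : ℝ} {n : ℤ}
    (hn : θ = (2 * n + 1) * π / p) (hside : OnOneSideOfPi (Ioo (θ - π / p) (θ + π / p)))
    (hx : x ∈ Ioo (θ - π / p) θ) (hy : y ∈ Ioo θ (θ + π / p)) :
    cosProd p x * cosProd p y < 0 := by
  have hu : 0 < π / p := div_pos pi_pos (by exact_mod_cast hp.pos)
  rw [mul_div_assoc] at hn
  have hxn : x ∈ Ioo ((2 * n - 1) * π / p) ((2 * n + 1) * π / p) := by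
    rw [mul_div_assoc, mul_div_assoc]; constructor <;> nlinarith [hx.1, hx.2]
  have hyn : y ∈ Ioo ((2 * ((n + 1 : ℤ) : ℝ) - 1) * π / p)
      ((2 * ((n + 1 : ℤ) : ℝ) + 1) * π / p) := by
    rw [mul_div_assoc, mul_div_assoc]; push_cast; constructor <;> nlinarith [hy.1, hy.2]
  have := hside.neg_one_zpow_mul_cosProd_mul_pos hp.pos
    (Ioo_subset_Ioo_right (by linarith) hx) (Ioo_subset_Ioo_left (by linarith) hy) hxn hyn
  rwa [Odd.neg_one_zpow ⟨n, by ring⟩, neg_one_mul, neg_pos] at this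

lemma containsOneSidedIoo_connectedComponentIn_Bset_of_cos_eq_zero {p : ℕ} (hp : Odd p)
    {θ : ℝ} (hθ : θ ∈ Bset p) (hz : cos (p * θ / 2) = 0) :
    ContainsOneSidedIoo (connectedComponentIn (Bset p) θ) (π / p) := by
  obtain ⟨hθI, hθπ, -⟩ := mem_Bset_iff.1 hθ
  obtain ⟨n, hn⟩ := cos_eq_zero_iff.1 hz
  have hp₀ : (0 : ℝ) < p := by exact_mod_cast hp.pos
  have hu : 0 < π / p := by positivity
  have hθn : θ = (2 * n + 1) * π / p := by field_simp; linarith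
  have hside := onOneSideOfPi_Ioo_of_eq_odd_mul_pi_div hp hθI hθπ hθn
  have mem_Bset : ∀ x ∈ Ioo (θ - π / p) (θ + π / p), 0 ≤ cosProd p x → x ∈ Bset p :=
    fun x hx h => mem_Bset_iff.2 ⟨(hside.mem_Ioo_ne_pi hx).1, (hside.mem_Ioo_ne_pi hx).2, h⟩
  refine containsOneSidedIoo_connectedComponentIn_of_Ioo_subset hθ hu hside ?_
  by_cases hleft : ∀ x ∈ Ioo (θ - π / p) θ, 0 ≤ cosProd p x
  · exact Or.inl fun x hx => mem_Bset x (Ioo_subset_Ioo_right (by linarith) hx) (hleft x hx)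
  · push Not at hleft
    obtain ⟨x, hx, hneg⟩ := hleft
    refine Or.inr fun y hy => mem_Bset y (Ioo_subset_Ioo_left (by linarith) hy) ?_
    exact (pos_of_mul_neg_right
      (cosProd_mul_neg_of_eq_odd_mul_pi_div hp hθn hside hx hy) hneg.le).le

lemma containsOneSidedIoo_connectedComponentIn_Bset {p : ℕ} (hp : Odd p) {θ : ℝ}
    (hθ : θ ∈ Bset p) : ContainsOneSidedIoo (connectedComponentIn (Bset p) θ) (π / p) := by
  by_cases hz : cos (p * θ / 2) = 0
  · exact containsOneSidedIoo_connectedComponentIn_Bset_of_cos_eq_zero hp hθ hz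
  · obtain ⟨n, hn⟩ := exists_mem_window hp.pos (mem_Bset_iff.1 hθ).1 hz
    exact containsOneSidedIoo_connectedComponentIn_of_window hp hn (window_subset_Bset hp hn hθ)

theorem component_refinement_general (p : ℕ) (hodd : Odd p) :
    ∃ N : ℕ, p < N ∧ ∀ q : ℕ, Odd q → N ≤ q →
      (∀ θ ∈ Aset p,
        (connectedComponentIn (Aset p) θ ∩ Aset q).Nonempty ∧
        (connectedComponentIn (Aset p) θ ∩ Bset q).Nonempty) ∧
      (∀ θ ∈ Bset p,
        (connectedComponentIn (Bset p) θ ∩ Aset q).Nonempty ∧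
        (connectedComponentIn (Bset p) θ ∩ Bset q).Nonempty) := by
  refine ⟨4 * p + 1, by omega, fun q _ hq => ?_⟩
  have hq₀ : 0 < q := by omega
  have hlen : 4 * π / q < π / p := by
    have hp₀ : (0 : ℝ) < p := by exact_mod_cast hodd.pos
    have hpq : (4 * p : ℝ) < q := by exact_mod_cast (by omega : 4 * p < q)
    rw [div_lt_div_iff₀ (by positivity) hp₀]
    nlinarith [pi_pos]
  exact ⟨fun θ hθ => (containsOneSidedIoo_connectedComponentIn_Aset hodd hθ)
      |>.inter_Aset_nonempty_and_inter_Bset_nonempty hq₀ hlen,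
    fun θ hθ => (containsOneSidedIoo_connectedComponentIn_Bset hodd hθ)
      |>.inter_Aset_nonempty_and_inter_Bset_nonempty hq₀ hlen⟩

/-- For every odd `p ≥ 3` there is an odd `q > p` (indeed any sufficiently large odd `q`
works) such that every connected component of `A_p`, and every connected component of its
complement in `(0,2π) \ {π}`, meets both `A_q` and the complement of `A_q`. -/
theorem component_refinement (p : ℕ) (hodd : Odd p) (hp : 3 ≤ p) :
    ∃ N : ℕ, p < N ∧ ∀ q : ℕ, Odd q → N ≤ q →
      (∀ θ ∈ Aset p,
        (connectedComponentIn (Aset p) θ ∩ Aset q).Nonempty ∧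
        (connectedComponentIn (Aset p) θ ∩ Bset q).Nonempty) ∧
      (∀ θ ∈ Bset p,
        (connectedComponentIn (Bset p) θ ∩ Aset q).Nonempty ∧
        (connectedComponentIn (Bset p) θ ∩ Bset q).Nonempty) :=
  component_refinement_general p hodd
end

section
/- There exists a strictly increasing sequence (p_n)_{n≥1} of odd integers ≥ 3 such that for every finite strictly increasing family of indices i₁ < i₂ < … < i_k and every choice of signs ε₁, …, ε_k ∈ {+1, −1}, the intersection A_{p_{i₁}}^{ε₁} ∩ ⋯ ∩ A_{p_{i_k}}^{ε_k} is nonempty, where A^{+1} = A and A^{−1} denotes the complement of A in (0,2π) \ {π}. -/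
/-- `A_p^{+1} = A_p` and `A_p^{-1}` is the complement of `A_p` in `(0, 2π) \ {π}`. -/
noncomputable def AsetSigned (p : ℕ) (ε : Bool) : Set ℝ :=
  if ε then Aset p else (Set.Ioo 0 (2 * Real.pi) \ {Real.pi}) \ Aset p

/-- Sign condition for `cos (q x)` according to a boolean sign. -/
def SignCond (q : ℕ) (s : Bool) (x : ℝ) : Prop :=
  if s then Real.cos (q * x) < 0 else 0 < Real.cos (q * x)

/-- In any interval of length at least `4π/q` one can find a subinterval of length
`π/(2q)` on which `cos (q x)` has the prescribed strict sign. -/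
lemma locate (q : ℕ) (hq : 1 ≤ q) (s : Bool) (a b : ℝ)
    (hab : 4 * Real.pi / q ≤ b - a) :
    ∃ a' b', a ≤ a' ∧ b' ≤ b ∧ b' - a' = Real.pi / (2 * q) ∧
      ∀ x ∈ Set.Icc a' b', SignCond q s x := by
  have pi_pos := Real.pi_pos
  have hq0 : (0 : ℝ) < q := by exact_mod_cast hq
  set φ : ℝ := if s then Real.pi else 0 with hφ
  have hφ0 : 0 ≤ φ := by rcases s with _ | _ <;> simp [hφ] <;> positivity
  have hφle : φ ≤ Real.pi := by rcases s with _ | _ <;> simp [hφ] <;> linarith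
  set n : ℤ := ⌈(q * a + Real.pi / 4) / (2 * Real.pi)⌉ with hn
  have h2pi : (0 : ℝ) < 2 * Real.pi := by linarith
  have h1 : q * a + Real.pi / 4 ≤ 2 * Real.pi * n := by
    have := Int.le_ceil ((q * a + Real.pi / 4) / (2 * Real.pi))
    rw [div_le_iff₀ h2pi] at this
    nlinarith
  have h2 : 2 * Real.pi * n < q * a + Real.pi / 4 + 2 * Real.pi := by
    have h0 := Int.ceil_lt_add_one ((q * a + Real.pi / 4) / (2 * Real.pi))
    rw [← hn] at h0
    have h0' : (n : ℝ) - 1 < (q * a + Real.pi / 4) / (2 * Real.pi) := by linarith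
    rw [lt_div_iff₀ h2pi] at h0'
    nlinarith
  have hqb : 4 * Real.pi ≤ q * b - q * a := by
    have := (div_le_iff₀ hq0).mp hab
    nlinarith
  refine ⟨(2 * Real.pi * n + φ - Real.pi / 4) / q,
    (2 * Real.pi * n + φ + Real.pi / 4) / q, ?_, ?_, ?_, ?_⟩
  · rw [le_div_iff₀ hq0]; nlinarith
  · rw [div_le_iff₀ hq0]; nlinarith
  · field_simp; ring
  · rintro x ⟨hx1, hx2⟩
    rw [div_le_iff₀ hq0] at hx1
    rw [le_div_iff₀ hq0] at hx2
    set u : ℝ := q * x - 2 * Real.pi * n - φ with hu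
    have hu1 : -(Real.pi / 4) ≤ u := by rw [hu]; nlinarith
    have hu2 : u ≤ Real.pi / 4 := by rw [hu]; nlinarith
    have hcu : 0 < Real.cos u :=
      Real.cos_pos_of_mem_Ioo ⟨by linarith, by linarith⟩
    have hrw : (q : ℝ) * x = (u + φ) + n * (2 * Real.pi) := by rw [hu]; ring
    rcases s with _ | _
    · have : φ = 0 := by simp [hφ]
      show 0 < Real.cos ((q : ℝ) * x)
      rw [hrw, this, Real.cos_add_int_mul_two_pi, add_zero]
      exact hcu
    · have : φ = Real.pi := by simp [hφ]
      show Real.cos ((q : ℝ) * x) < 0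
      rw [hrw, this, Real.cos_add_int_mul_two_pi, Real.cos_add_pi]
      linarith

/-- The key induction: given a long enough interval, one can find a point where
`cos (25^(i j + 1) * x)` has all the prescribed signs. -/
lemma main_ind (k : ℕ) : ∀ (m : ℕ) (i : Fin k → ℕ) (ε : Fin k → Bool), StrictMono i →
    (∀ j, m ≤ i j) → ∀ a b : ℝ, 4 * Real.pi / (25 : ℝ) ^ (m + 1) ≤ b - a →
    ∃ x, x ∈ Set.Icc a b ∧ ∀ j, SignCond (25 ^ (i j + 1)) (ε j) x := by
  induction k with
  | zero =>
    intro m i ε _ _ a b hab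
    have pi_pos := Real.pi_pos
    have hpow : (0 : ℝ) < (25 : ℝ) ^ (m + 1) := by positivity
    have : 0 ≤ b - a := le_trans (by positivity) hab
    exact ⟨a, ⟨le_refl a, by linarith⟩, fun j => j.elim0⟩
  | succ k ih =>
    intro m i ε hi hm a b hab
    have pi_pos := Real.pi_pos
    set q : ℕ := 25 ^ (i 0 + 1) with hqdef
    have hq1 : 1 ≤ q := Nat.one_le_pow _ _ (by norm_num)
    have hq0 : (0 : ℝ) < q := by exact_mod_cast hq1
    have hmle : (25 : ℝ) ^ (m + 1) ≤ (q : ℝ) := by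
      rw [hqdef]
      push_cast
      exact pow_le_pow_right₀ (by norm_num) (by have := hm 0; omega)
    have hab' : 4 * Real.pi / q ≤ b - a := by
      refine le_trans ?_ hab
      apply div_le_div_of_nonneg_left (by positivity) (by positivity) hmle
    obtain ⟨a', b', ha', hb', hlen, hsign⟩ := locate q hq1 (ε 0) a b hab'
    have hab'' : 4 * Real.pi / (25 : ℝ) ^ (i 0 + 1 + 1) ≤ b' - a' := by
      rw [hlen, hqdef]
      rw [div_le_div_iff₀ (by positivity) (by positivity)]
      push_cast
      ring_nf
      nlinarith [pow_pos (by norm_num : (0:ℝ) < 25) (i 0), pi_pos]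
    have htailmono : StrictMono (fun j : Fin k => i j.succ) := by
      intro j₁ j₂ h
      exact hi (Fin.succ_lt_succ_iff.mpr h)
    have htailge : ∀ j : Fin k, i 0 + 1 ≤ i j.succ := by
      intro j
      exact hi (Fin.succ_pos j)
    obtain ⟨x, hx, hxsign⟩ := ih (i 0 + 1) (fun j => i j.succ) (fun j => ε j.succ)
      htailmono htailge a' b' hab''
    refine ⟨x, ⟨le_trans ha' hx.1, le_trans hx.2 hb'⟩, ?_⟩
    intro j
    rcases Fin.eq_zero_or_eq_succ j with rfl | ⟨j', rfl⟩
    · exact hsign x ⟨hx.1, hx.2⟩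
    · exact hxsign j'

/-- There is a strictly increasing sequence of odd integers `≥ 3` such that any finite
intersection `A_{p_{i₁}}^{ε₁} ∩ ⋯ ∩ A_{p_{i_k}}^{ε_k}` with `i₁ < ⋯ < i_k` and signs
`ε_j ∈ {+1, -1}` is nonempty. -/
theorem exists_independent_sequence :
    ∃ p : ℕ → ℕ, StrictMono p ∧ (∀ n, Odd (p n) ∧ 3 ≤ p n) ∧
      ∀ (k : ℕ) (i : Fin k → ℕ) (ε : Fin k → Bool), StrictMono i →
        (⋂ j : Fin k, AsetSigned (p (i j)) (ε j)).Nonempty := by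
  have pi_pos := Real.pi_pos
  refine ⟨fun n => 25 ^ (n + 1), ?_, ?_, ?_⟩
  · intro m n h
    exact Nat.pow_lt_pow_right (by norm_num) (by omega)
  · intro n
    constructor
    · exact Odd.pow ⟨12, by norm_num⟩
    · calc (3 : ℕ) ≤ 25 := by norm_num
        _ ≤ 25 ^ (n + 1) := Nat.le_self_pow (by omega) 25
  · intro k i ε hi
    have hab : 4 * Real.pi / (25 : ℝ) ^ (0 + 1) ≤ 3 * Real.pi / 8 - Real.pi / 8 := by
      rw [div_le_iff₀ (by positivity)]
      ring_nf
      nlinarith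
    obtain ⟨x, hx, hsign⟩ := main_ind k 0 i ε hi (fun j => Nat.zero_le _)
      (Real.pi / 8) (3 * Real.pi / 8) hab
    refine ⟨2 * x, Set.mem_iInter.mpr fun j => ?_⟩
    have hx1 : Real.pi / 8 ≤ x := hx.1
    have hx2 : x ≤ 3 * Real.pi / 8 := hx.2
    have hθmem : 2 * x ∈ Set.Ioo 0 (2 * Real.pi) := ⟨by linarith, by linarith⟩
    have hθne : 2 * x ≠ Real.pi := by intro h; nlinarith [h]
    have hcosx : 0 < Real.cos (2 * x / 2) := by
      have : 2 * x / 2 = x := by ring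
      rw [this]
      exact Real.cos_pos_of_mem_Ioo ⟨by linarith, by linarith⟩
    have hcosq : Real.cos ((25 ^ (i j + 1) : ℕ) * (2 * x) / 2)
        = Real.cos ((25 ^ (i j + 1) : ℕ) * x) := by
      congr 1; ring
    have := hsign j
    rcases hε : ε j with _ | _
    · rw [hε] at this
      simp only [SignCond, if_neg (by simp : ¬ (false = true))] at this
      simp only [AsetSigned, if_neg (by simp : ¬ (false = true))]
      refine ⟨⟨hθmem, hθne⟩, ?_⟩
      intro hmem
      have hlt := hmem.2.2
      rw [hcosq] at hlt
      have : 0 < Real.cos ((25 ^ (i j + 1) : ℕ) * x) / Real.cos (2 * x / 2) :=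
        div_pos this hcosx
      linarith
    · rw [hε] at this
      simp only [SignCond, if_pos rfl] at this
      simp only [AsetSigned, if_pos rfl]
      refine ⟨hθmem, hθne, ?_⟩
      rw [hcosq]
      exact div_neg_of_neg_of_pos this hcosx
end

section
/- Define p_n := 3·5·7···(2n+1) = ∏_{j=1}^{n} (2j+1) for n ≥ 1. Then (p_n) is a strictly increasing sequence of odd integers, and for every finite strictly increasing family of indices i₁ < i₂ < … < i_k and every choice of signs ε₁, …, ε_k ∈ {+1, −1}, the intersection A_{p_{i₁}}^{ε₁} ∩ ⋯ ∩ A_{p_{i_k}}^{ε_k} is nonempty. -/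
/-- `p_n = 3 · 5 · 7 ⋯ (2n+1) = ∏_{j=1}^{n} (2j+1)`. -/
def pseq (n : ℕ) : ℕ := ∏ j ∈ Finset.Icc 1 n, (2 * j + 1)

/-
Put `θ = 2φ` with `φ ∈ (0, π/2)`. Then `cos φ > 0`, so `θ ∈ A_p^ε` just says that `cos (p φ)`
is negative exactly when `ε = +1`. Consecutive terms of the family satisfy
`p_{i_{j+1}} ≥ (2 i_j + 3) p_{i_j} ≥ 5 p_{i_j}`, which drives a nested-interval argument: on an
interval of length `π / (2q)` the map `φ ↦ q' φ`, `q' ≥ 5q`, sweeps an interval of length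
`≥ 5π/2`, which contains a whole window `[x, x + π/2]` on which `cos` has any prescribed sign.
-/

open Real Set

lemma pseq_succ (n : ℕ) : pseq (n + 1) = pseq n * (2 * n + 3) :=
  Finset.prod_Icc_succ_top (by omega) _

lemma pseq_pos (n : ℕ) : 0 < pseq n :=
  Finset.prod_pos fun j _ => by omega

lemma strictMono_pseq : StrictMono pseq :=
  strictMono_nat_of_lt_succ fun n => by
    rw [pseq_succ]
    exact lt_mul_of_one_lt_right (pseq_pos n) (by omega)

lemma odd_pseq (n : ℕ) : Odd (pseq n) :=
  Finset.prod_induction _ Odd (fun _ _ => Odd.mul) odd_one fun j _ => odd_two_mul_add_one j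

lemma three_le_pseq {n : ℕ} (hn : 1 ≤ n) : 3 ≤ pseq n :=
  strictMono_pseq.monotone hn

lemma five_mul_pseq_le {a b : ℕ} (ha : 1 ≤ a) (hab : a < b) : 5 * pseq a ≤ pseq b :=
  calc 5 * pseq a ≤ pseq a * (2 * a + 3) := by rw [mul_comm]; gcongr; omega
    _ = pseq (a + 1) := (pseq_succ a).symm
    _ ≤ pseq b := strictMono_pseq.monotone hab

lemma two_mul_mem_asetSigned_iff {p : ℕ} {ε : Bool} {φ : ℝ} (hφ : φ ∈ Ioo 0 (π / 2)) :
    2 * φ ∈ AsetSigned p ε ↔ (cos (p * φ) < 0 ↔ ε) := by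
  have hcos : 0 < cos φ := cos_pos_of_mem_Ioo ⟨by linarith [hφ.1, pi_pos], hφ.2⟩
  have hne : 2 * φ ≠ π := (by linarith [hφ.2] : 2 * φ < π).ne
  have hθ : 2 * φ ∈ Ioo 0 (2 * π) \ {π} :=
    ⟨⟨by linarith [hφ.1], by linarith [hφ.2, pi_pos]⟩, hne⟩
  have hA : 2 * φ ∈ Aset p ↔ cos (p * φ) < 0 := by
    simp only [Aset, mem_ofPred_eq, mul_div_cancel_left₀ φ two_ne_zero,
      show (p : ℝ) * (2 * φ) / 2 = p * φ by ring, div_neg_iff, not_lt_of_gt hcos, hcos]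
    simp [hθ.1, hne]
  cases ε <;> simp [AsetSigned, hA, hθ]

/-- `cos` is negative on `[cosWindowStart true n, cosWindowStart true n + π / 2]` and
nonnegative on `[cosWindowStart false n, cosWindowStart false n + π / 2]`. -/
noncomputable def cosWindowStart (s : Bool) (n : ℤ) : ℝ :=
  (bif s then 3 * π / 4 else 0) + n * (2 * π)

lemma cos_neg_iff_of_mem_Icc_cosWindowStart {s : Bool} {n : ℤ} {y : ℝ}
    (hy : y ∈ Icc (cosWindowStart s n) (cosWindowStart s n + π / 2)) : cos y < 0 ↔ s := by
  have hπ := pi_pos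
  rw [← cos_sub_int_mul_two_pi y n]
  obtain ⟨hy₁, hy₂⟩ := hy
  cases s <;> simp only [cosWindowStart, cond_true, cond_false] at hy₁ hy₂
  · exact iff_of_false (cos_nonneg_of_mem_Icc ⟨by linarith, by linarith⟩).not_gt (by simp)
  · exact iff_of_true (cos_neg_of_pi_div_two_lt_of_lt (by linarith) (by linarith)) rfl

lemma exists_cosWindowStart_mem_Ico (s : Bool) (c : ℝ) :
    ∃ n : ℤ, cosWindowStart s n ∈ Ico c (c + 2 * π) := by
  obtain ⟨n, hn, -⟩ := existsUnique_add_zsmul_mem_Ico two_pi_pos (bif s then 3 * π / 4 else 0) c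
  exact ⟨n, by simpa [cosWindowStart, zsmul_eq_mul] using hn⟩

lemma cosWindowStart_zero_mem_Icc (s : Bool) : cosWindowStart s 0 ∈ Icc 0 (3 * π / 4) := by
  have hπ := pi_pos
  cases s <;> simp [cosWindowStart] <;> linarith

lemma cos_mul_neg_iff_of_mem_Ioo {s : Bool} {n : ℤ} {q φ : ℝ} (hq : 0 < q)
    (hφ : φ ∈ Ioo (cosWindowStart s n / q) (cosWindowStart s n / q + π / (2 * q))) :
    cos (q * φ) < 0 ↔ s := by
  refine cos_neg_iff_of_mem_Icc_cosWindowStart (n := n) ⟨?_, ?_⟩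
  · have := hφ.1
    rw [div_lt_iff₀ hq] at this
    linarith
  · have := hφ.2
    rw [show π / (2 * q) = π / 2 / q by ring, ← add_div, lt_div_iff₀ hq] at this
    linarith

/-- `5π / 2 = 2π + π / 2`: a full period of `cos` plus the length of a window. -/
lemma exists_Ioo_subset_cos_mul_neg_iff (s : Bool) {q a L : ℝ} (hq : 0 < q)
    (hqL : 5 * π / 2 ≤ q * L) :
    ∃ b, Ioo b (b + π / (2 * q)) ⊆ Ioo a (a + L) ∧
      ∀ φ ∈ Ioo b (b + π / (2 * q)), (cos (q * φ) < 0 ↔ s) := by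
  obtain ⟨n, hn₁, hn₂⟩ := exists_cosWindowStart_mem_Ico s (q * a)
  refine ⟨cosWindowStart s n / q, Ioo_subset_Ioo ?_ ?_,
    fun φ hφ => cos_mul_neg_iff_of_mem_Ioo hq hφ⟩
  · rwa [le_div_iff₀' hq]
  · rw [show π / (2 * q) = π / 2 / q by ring, ← add_div, div_le_iff₀' hq]
    linarith

lemma five_mul_pi_div_two_le {q q' : ℝ} (hq : 0 < q) (h : 5 * q ≤ q') :
    5 * π / 2 ≤ q' * (π / (2 * q)) := by
  rw [← mul_div_assoc, le_div_iff₀ (by positivity)]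
  nlinarith [pi_pos]

lemma exists_mem_Ioo_forall_cos_mul_neg_iff {k : ℕ} (q : Fin k → ℝ) (s : Fin k → Bool)
    {a L : ℝ} (hL : 0 < L) (hqL : ∀ j, 5 * π / 2 ≤ q j * L)
    (hq : ∀ j j', j < j' → 5 * q j ≤ q j') :
    ∃ φ ∈ Ioo a (a + L), ∀ j, (cos (q j * φ) < 0 ↔ s j) := by
  induction k generalizing a L with
  | zero => exact ⟨a + L / 2, ⟨by linarith, by linarith⟩, fun j => j.elim0⟩
  | succ k ih =>
    have hq₀ : 0 < q 0 := pos_of_mul_pos_left (by linarith [hqL 0, pi_pos]) hL.le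
    obtain ⟨b, hsub, hb⟩ := exists_Ioo_subset_cos_mul_neg_iff (s 0) hq₀ (hqL 0)
    obtain ⟨φ, hφ, hφq⟩ := ih (fun j => q j.succ) (fun j => s j.succ) (by positivity)
      (fun j => five_mul_pi_div_two_le hq₀ (hq 0 j.succ j.succ_pos))
      (fun j j' h => hq _ _ (Fin.succ_lt_succ_iff.2 h))
    exact ⟨φ, hsub hφ, Fin.cases (hb φ hφ) hφq⟩

lemma exists_mem_Ioo_zero_pi_div_two_forall_cos_mul_neg_iff {k : ℕ} (q : Fin (k + 1) → ℝ)
    (s : Fin (k + 1) → Bool) (hq₀ : 3 ≤ q 0) (hq : ∀ j j', j < j' → 5 * q j ≤ q j') :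
    ∃ φ ∈ Ioo 0 (π / 2), ∀ j, (cos (q j * φ) < 0 ↔ s j) := by
  obtain ⟨hx₀, hx⟩ := cosWindowStart_zero_mem_Icc (s 0)
  set x := cosWindowStart (s 0) 0
  have hq₀' : 0 < q 0 := by linarith
  obtain ⟨φ, hφ, hφq⟩ := exists_mem_Ioo_forall_cos_mul_neg_iff (fun j => q j.succ)
    (fun j => s j.succ) (a := x / q 0) (by positivity)
    (fun j => five_mul_pi_div_two_le hq₀' (hq 0 j.succ j.succ_pos))
    (fun j j' h => hq _ _ (Fin.succ_lt_succ_iff.2 h))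
  refine ⟨φ, Ioo_subset_Ioo (by positivity) ?_ hφ,
    Fin.cases (cos_mul_neg_iff_of_mem_Ioo hq₀' hφ) hφq⟩
  rw [show π / (2 * q 0) = π / 2 / q 0 by ring, ← add_div, div_le_iff₀ hq₀']
  nlinarith [pi_pos]

/-- The sequence `p_n = 3 · 5 ⋯ (2n+1)` (for `n ≥ 1`) is a strictly increasing sequence of
odd integers, and every finite intersection `A_{p_{i₁}}^{ε₁} ∩ ⋯ ∩ A_{p_{i_k}}^{ε_k}` with
`1 ≤ i₁ < ⋯ < i_k` and signs `ε_j ∈ {+1, -1}` is nonempty. -/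
theorem pseq_independent :
    StrictMonoOn pseq (Set.Ici 1) ∧ (∀ n, 1 ≤ n → Odd (pseq n)) ∧
      ∀ (k : ℕ) (i : Fin k → ℕ) (ε : Fin k → Bool),
        (∀ j, 1 ≤ i j) → StrictMono i →
        (⋂ j : Fin k, AsetSigned (pseq (i j)) (ε j)).Nonempty := by
  refine ⟨strictMono_pseq.strictMonoOn _, fun n _ => odd_pseq n, ?_⟩
  rintro (_ | k) i ε hi hmono
  · simp
  obtain ⟨φ, hφ, hcos⟩ := exists_mem_Ioo_zero_pi_div_two_forall_cos_mul_neg_iff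
    (fun j => (pseq (i j) : ℝ)) ε (by exact_mod_cast three_le_pseq (hi 0))
    (fun j j' h => by exact_mod_cast five_mul_pseq_le (hi j) (hmono h))
  exact ⟨2 * φ, mem_iInter.2 fun j => (two_mul_mem_asetSigned_iff hφ).2 (hcos j)⟩
end
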